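/- arXiv:1806.00332 — 8 statements merged into one kernel-verified Lean document; each statement's English description precedes it below -/
import Mathlib

section
/- Let Z be a set, let D ⊆ 𝒫(ω) and E_m ⊆ 𝒫(ω) for each m ∈ ω. Then there exists F ⊆ 𝒫(ω) such that for all A_0, A_1, … ⊆ Z, if B_m = H_{E_m}(A_{⟨m,0⟩}, A_{⟨m,1⟩}, …) (where ⟨·,·⟩ is a fixed pairing bijection ω×ω → ω), then H_D(B_0, B_1, …) = H_F(A_0, A_1, …). In other words, compositions of Hausdorff operations are Hausdorff operations. -/
/-- The Hausdorff operation determined by `D ⊆ 𝒫(ω)`. -/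
def hausdorffOp {Z : Type*} (D : Set (Set ℕ)) (A : ℕ → Set Z) : Set Z :=
  {x | {n | x ∈ A n} ∈ D}

def hausdorffComp (D : Set (Set ℕ)) (E : ℕ → Set (Set ℕ)) (p : ℕ × ℕ → ℕ) : Set (Set ℕ) :=
  {S | {m | {n | p (m, n) ∈ S} ∈ E m} ∈ D}

theorem hausdorffOp_hausdorffOp {Z : Type*} (D : Set (Set ℕ)) (E : ℕ → Set (Set ℕ))
    (p : ℕ × ℕ → ℕ) (A : ℕ → Set Z) :
    hausdorffOp D (fun m => hausdorffOp (E m) (fun n => A (p (m, n)))) =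
      hausdorffOp (hausdorffComp D E p) A :=
  rfl

/-- Compositions of Hausdorff operations are Hausdorff operations. -/
theorem stmt1 {Z : Type*} (D : Set (Set ℕ)) (E : ℕ → Set (Set ℕ)) (π : ℕ × ℕ ≃ ℕ) :
    ∃ F : Set (Set ℕ), ∀ A : ℕ → Set Z,
      hausdorffOp D (fun m => hausdorffOp (E m) (fun n => A (π (m, n)))) =
        hausdorffOp F A :=
  ⟨hausdorffComp D E π, hausdorffOp_hausdorffOp D E π⟩
end

section
/- Let Z ⊆ ω^ω and let ρ: ω^ω → Z be a retraction (a continuous function with ρ restricted to Z equal to the identity). Fix A, B ⊆ Z. Then A is Wadge-reducible to B in Z if and only if ρ⁻¹[A] is Wadge-reducible to ρ⁻¹[B] in ω^ω. -/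
/-- Wadge reducibility: `A ≤ B` in `Z` iff `A = f ⁻¹' B` for some continuous `f : Z → Z`. -/
def WadgeLE {Z : Type*} [TopologicalSpace Z] (A B : Set Z) : Prop :=
  ∃ f : Z → Z, Continuous f ∧ A = f ⁻¹' B

section Retract

variable {X Z : Type*} [TopologicalSpace X] [TopologicalSpace Z] {i : Z → X} {ρ : X → Z}

theorem WadgeLE.preimage_retraction (hi : Continuous i) (hρ : Continuous ρ)
    (hρi : Function.LeftInverse ρ i) {A B : Set Z} (h : WadgeLE A B) :
    WadgeLE (ρ ⁻¹' A) (ρ ⁻¹' B) := by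
  obtain ⟨f, hf, rfl⟩ := h
  refine ⟨i ∘ f ∘ ρ, hi.comp (hf.comp hρ), ?_⟩
  ext x
  simp [hρi (f (ρ x))]

theorem WadgeLE.of_preimage_retraction (hi : Continuous i) (hρ : Continuous ρ)
    (hρi : Function.LeftInverse ρ i) {A B : Set Z} (h : WadgeLE (ρ ⁻¹' A) (ρ ⁻¹' B)) :
    WadgeLE A B := by
  obtain ⟨g, hg, hAB⟩ := h
  refine ⟨ρ ∘ g ∘ i, hρ.comp (hg.comp hi), ?_⟩
  ext z
  have hz : i z ∈ ρ ⁻¹' A ↔ i z ∈ g ⁻¹' (ρ ⁻¹' B) := by rw [hAB]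
  simpa [hρi z] using hz

theorem wadgeLE_iff_preimage_retraction (hi : Continuous i) (hρ : Continuous ρ)
    (hρi : Function.LeftInverse ρ i) (A B : Set Z) :
    WadgeLE A B ↔ WadgeLE (ρ ⁻¹' A) (ρ ⁻¹' B) :=
  ⟨WadgeLE.preimage_retraction hi hρ hρi, WadgeLE.of_preimage_retraction hi hρ hρi⟩

end Retract

theorem stmt3 (Z : Set (ℕ → ℕ)) (ρ : (ℕ → ℕ) → Z) (hρ : Continuous ρ)
    (hret : ∀ z : Z, ρ z.val = z) (A B : Set Z) :
    WadgeLE A B ↔ WadgeLE (ρ ⁻¹' A) (ρ ⁻¹' B) :=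
  wadgeLE_iff_preimage_retraction continuous_subtype_val hρ hret A B
end

section
/- Let Z be a topological space, let Γ be a Wadge class in Z, and let A ∈ Γ. Then: (1) if Γ ≠ {Z}, then A ∩ V ∈ Γ for every clopen V ⊆ Z; (2) if Γ ≠ {∅}, then A ∪ V ∈ Γ for every clopen V ⊆ Z. -/
/-
The clopen set `V` lets us glue two reductions to `C`: use one on `V` and the other off `V`.
Gluing a reduction of `A` with a constant map to a point outside `C` (resp. inside `C`) reduces
`A ∩ V` (resp. `A ∪ V`) to `C`, and such a point exists unless `C = univ` (resp. `C = ∅`), in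
which case the Wadge class of `C` is `{univ}` (resp. `{∅}`).
-/

open Set

namespace WadgeLE

variable {Z : Type*} [TopologicalSpace Z] {A B C V : Set Z}

theorem refl (C : Set Z) : WadgeLE C C :=
  ⟨id, continuous_id, rfl⟩

theorem ite (hV : IsClopen V) (hA : WadgeLE A C) (hB : WadgeLE B C) :
    WadgeLE (V.ite A B) C := by
  classical
  obtain ⟨f, hf, rfl⟩ := hA
  obtain ⟨g, hg, rfl⟩ := hB
  refine ⟨V.piecewise f g, hf.piecewise (by simp [hV.frontier_eq]) hg, ?_⟩
  rw [piecewise_preimage]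

theorem empty_of_not_mem {c : Z} (hc : c ∉ C) : WadgeLE ∅ C :=
  ⟨fun _ => c, continuous_const, by simp [hc]⟩

theorem univ_of_mem {c : Z} (hc : c ∈ C) : WadgeLE univ C :=
  ⟨fun _ => c, continuous_const, by simp [hc]⟩

theorem eq_univ (h : WadgeLE A univ) : A = univ := by
  obtain ⟨f, -, rfl⟩ := h
  rfl

theorem eq_empty (h : WadgeLE A ∅) : A = ∅ := by
  obtain ⟨f, -, rfl⟩ := h
  rfl

theorem inter_clopen (hA : WadgeLE A C) (hV : IsClopen V) (hC : C ≠ univ) :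
    WadgeLE (A ∩ V) C := by
  obtain ⟨c, hc⟩ := (ne_univ_iff_exists_notMem C).mp hC
  simpa [Set.ite] using ite hV hA (empty_of_not_mem hc)

theorem union_clopen (hA : WadgeLE A C) (hV : IsClopen V) (hC : C ≠ ∅) :
    WadgeLE (A ∪ V) C := by
  obtain ⟨c, hc⟩ := nonempty_iff_ne_empty.mpr hC
  simpa [Set.ite, union_comm] using ite hV (univ_of_mem hc) hA

end WadgeLE

theorem setOf_wadgeLE_univ (Z : Type*) [TopologicalSpace Z] :
    {B : Set Z | WadgeLE B univ} = {univ} :=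
  eq_singleton_iff_unique_mem.mpr ⟨WadgeLE.refl _, fun _ => WadgeLE.eq_univ⟩

theorem setOf_wadgeLE_empty (Z : Type*) [TopologicalSpace Z] :
    {B : Set Z | WadgeLE B ∅} = {∅} :=
  eq_singleton_iff_unique_mem.mpr ⟨WadgeLE.refl _, fun _ => WadgeLE.eq_empty⟩

theorem stmt4 {Z : Type*} [TopologicalSpace Z] (Γ : Set (Set Z))
    (hΓ : ∃ C : Set Z, Γ = {B | WadgeLE B C}) (A : Set Z) (hA : A ∈ Γ) :
    (Γ ≠ {Set.univ} → ∀ V : Set Z, IsClopen V → A ∩ V ∈ Γ) ∧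
    (Γ ≠ {∅} → ∀ V : Set Z, IsClopen V → A ∪ V ∈ Γ) := by
  obtain ⟨C, rfl⟩ := hΓ
  refine ⟨fun hΓ V hV => hA.inter_clopen hV ?_, fun hΓ V hV => hA.union_clopen hV ?_⟩
  · rintro rfl
    exact hΓ (setOf_wadgeLE_univ Z)
  · rintro rfl
    exact hΓ (setOf_wadgeLE_empty Z)
end

section
/- Let X be a zero-dimensional homogeneous separable metrizable space. If there exists a non-empty open subset U of X that is Polish (completely metrizable), then X itself is Polish. -/
/-!
Homogeneity moves the non-empty Polish open set onto a neighbourhood of any point, and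
zero-dimensionality shrinks that neighbourhood to a clopen one, which is still Polish. By
second countability countably many of these clopen sets cover `X`; making them disjoint exhibits
`X` as a countable topological sum of Polish spaces.
-/

open Function Set Topology

section

variable {X : Type*} [TopologicalSpace X]

theorem PolishSpace.of_isOpen_of_subset {V W : Set X} [PolishSpace W] (hV : IsOpen V)
    (hVW : V ⊆ W) : PolishSpace V := by
  have hopen : IsOpen (range (inclusion hVW)) := by
    rw [range_inclusion]
    exact hV.preimage continuous_subtype_val
  have := hopen.polishSpace
  exact (IsEmbedding.inclusion hVW).toHomeomorph.isClosedEmbedding.polishSpace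

theorem PolishSpace.of_pairwiseDisjoint_isOpen {ι : Type*} [Countable ι] (s : ι → Set X)
    (hs : ∀ i, IsOpen (s i)) (hdisj : Pairwise (Disjoint on s)) (hcover : ⋃ i, s i = univ)
    [∀ i, PolishSpace (s i)] : PolishSpace X := by
  let incl : (Σ i, s i) → X := fun p => p.2
  have hinj : incl.Injective := by
    rintro ⟨i, x, hxi⟩ ⟨j, y, hyj⟩ (rfl : x = y)
    obtain rfl : i = j := by_contra fun hij => (hdisj hij).notMem_of_mem_left hxi hyj
    rfl
  have hsurj : incl.Surjective := fun x => by
    obtain ⟨i, hxi⟩ := mem_iUnion.1 (hcover.symm ▸ mem_univ x)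
    exact ⟨⟨i, x, hxi⟩, rfl⟩
  let e : (Σ i, s i) ≃ₜ X := (Equiv.ofBijective incl ⟨hinj, hsurj⟩).toHomeomorphOfContinuousOpen
    (continuous_sigma fun _ => continuous_subtype_val)
    (isOpenMap_sigma.2 fun i => (hs i).isOpenMap_subtype_val)
  exact e.symm.isClosedEmbedding.polishSpace

theorem PolishSpace.of_iUnion_isClopen (s : ℕ → Set X) (hs : ∀ n, IsClopen (s n))
    [∀ n, PolishSpace (s n)] (hcover : ⋃ n, s n = univ) : PolishSpace X := by
  have hclopen : ∀ n, IsClopen (disjointed s n) := fun n =>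
    disjointedRec (fun _ i ht => ht.diff (hs i)) (hs n)
  have := fun n => PolishSpace.of_isOpen_of_subset (hclopen n).isOpen (disjointed_subset s n)
  exact .of_pairwiseDisjoint_isOpen (disjointed s) (fun n => (hclopen n).isOpen)
    (disjoint_disjointed s) (iUnion_disjointed.trans hcover)

theorem PolishSpace.of_forall_exists_isClopen [SecondCountableTopology X]
    (h : ∀ x : X, ∃ V, IsClopen V ∧ x ∈ V ∧ PolishSpace V) : PolishSpace X := by
  rcases isEmpty_or_nonempty X with _ | _
  · infer_instance
  choose V hV hxV hVpolish using h
  obtain ⟨T, hTc, hTcover⟩ := countable_cover_nhds fun x => (hV x).isOpen.mem_nhds (hxV x)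
  obtain ⟨f, rfl⟩ := hTc.exists_eq_range <| by
    obtain ⟨x, hxT, -⟩ := mem_iUnion₂.1 (hTcover.symm ▸ mem_univ (Classical.arbitrary X))
    exact ⟨x, hxT⟩
  rw [biUnion_range] at hTcover
  have := fun n => hVpolish (f n)
  exact .of_iUnion_isClopen (fun n => V (f n)) (fun n => hV (f n)) hTcover

end

theorem stmt5_general {X : Type*} [TopologicalSpace X]
    [SecondCountableTopology X]
    (hzd : ∀ x : X, ∀ U : Set X, IsOpen U → x ∈ U → ∃ V : Set X, IsClopen V ∧ x ∈ V ∧ V ⊆ U)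
    (hhom : ∀ x y : X, ∃ h : X ≃ₜ X, h x = y)
    (hU : ∃ U : Set X, IsOpen U ∧ U.Nonempty ∧ PolishSpace U) :
    PolishSpace X := by
  obtain ⟨U, hUopen, ⟨u, hu⟩, hUpolish⟩ := hU
  refine .of_forall_exists_isClopen fun x => ?_
  obtain ⟨h, rfl⟩ := hhom u x
  have : PolishSpace (h '' U) := (h.image U).symm.isClosedEmbedding.polishSpace
  obtain ⟨V, hV, hxV, hVU⟩ := hzd (h u) (h '' U) (h.isOpenMap U hUopen) (mem_image_of_mem h hu)
  exact ⟨V, hV, hxV, .of_isOpen_of_subset hV.isOpen hVU⟩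

theorem stmt5 {X : Type*} [TopologicalSpace X] [TopologicalSpace.MetrizableSpace X]
    [SecondCountableTopology X]
    (hne : Nonempty X)
    (hzd : ∀ x : X, ∀ U : Set X, IsOpen U → x ∈ U → ∃ V : Set X, IsClopen V ∧ x ∈ V ∧ V ⊆ U)
    (hhom : ∀ x y : X, ∃ h : X ≃ₜ X, h x = y)
    (hU : ∃ U : Set X, IsOpen U ∧ U.Nonempty ∧ PolishSpace U) :
    PolishSpace X :=
  stmt5_general hzd hhom hU
end

section
/- Let Z be a Polish space and let X be a dense Baire subspace of Z having the Baire property in Z. Then X is comeager in Z. -/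
/-!
Write `X = U △ M` with `U` open and `M` meagre. A meagre subset of `Z` traces a meagre subset
of the dense subspace `X`, so `X \ U` is meagre in `X`; hence every nonempty open subset of `X`
meets `U`, and as `X` is dense this forces `U` to be dense. Then `Xᶜ ⊆ Uᶜ ∪ (U \ X)` is the union
of a nowhere dense closed set and a meagre set.
-/

section

open Filter

variable {Z : Type*} [TopologicalSpace Z] {X : Set Z}

theorem Dense.preimage_val_of_isOpen (hX : Dense X) {t : Set Z} (ht : IsOpen t) (htd : Dense t) :
    Dense ((↑) ⁻¹' t : Set X) := by
  rw [← hX.isDenseInducing_val.dense_image, Subtype.image_preimage_coe]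
  exact hX.inter_of_isOpen_right htd ht

theorem Dense.tendsto_val_residual (hX : Dense X) :
    Tendsto ((↑) : X → Z) (residual X) (residual Z) := by
  apply le_countableGenerate_iff_of_countableInterFilter.mpr
  rintro t ⟨ht, htd⟩
  exact residual_of_dense_open (ht.preimage continuous_subtype_val)
    (hX.preimage_val_of_isOpen ht htd)

theorem IsMeagre.preimage_val_of_dense (hX : Dense X) {s : Set Z} (hs : IsMeagre s) :
    IsMeagre ((↑) ⁻¹' s : Set X) :=
  hX.tendsto_val_residual hs

theorem dense_of_isMeagre_diff (hX : Dense X)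
    (hBaire : ∀ V : Set X, IsOpen V → V.Nonempty → ¬ IsMeagre V)
    {U : Set Z} (hU : IsMeagre (X \ U)) : Dense U := by
  rw [dense_iff_inter_open]
  intro V hV hVne
  by_contra hVU
  have hVX : ((↑) ⁻¹' V : Set X).Nonempty := by
    obtain ⟨x, hxV, hxX⟩ := hX.inter_open_nonempty V hV hVne
    exact ⟨⟨x, hxX⟩, hxV⟩
  refine hBaire _ (hV.preimage continuous_subtype_val) hVX
    ((hU.preimage_val_of_dense hX).mono ?_)
  rintro ⟨x, hxX⟩ hxV
  exact ⟨hxX, fun hxU => hVU ⟨x, hxV, hxU⟩⟩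

end

theorem stmt6_general {Z : Type*} [TopologicalSpace Z] (X : Set Z)
    (hdense : Dense X)
    (hBaire : ∀ U : Set X, IsOpen U → U.Nonempty → ¬ IsMeagre U)
    (hBP : ∃ U : Set Z, IsOpen U ∧ IsMeagre (symmDiff X U)) :
    IsMeagre Xᶜ := by
  obtain ⟨U, hUo, hM⟩ := hBP
  have hUd : Dense U :=
    dense_of_isMeagre_diff hdense hBaire (hM.mono fun _ hx => Or.inl hx)
  have hUc : IsMeagre Uᶜ := by
    rw [IsMeagre, compl_compl]
    exact residual_of_dense_open hUo hUd
  refine (hUc.union hM).mono fun x hx => ?_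
  by_cases hxU : x ∈ U
  · exact Or.inr (Or.inr ⟨hxU, hx⟩)
  · exact Or.inl hxU

theorem stmt6 {Z : Type*} [TopologicalSpace Z] [PolishSpace Z] (X : Set Z)
    (hdense : Dense X)
    (hBaire : ∀ U : Set X, IsOpen U → U.Nonempty → ¬ IsMeagre U)
    (hBP : ∃ U : Set Z, IsOpen U ∧ IsMeagre (symmDiff X U)) :
    IsMeagre Xᶜ :=
  stmt6_general X hdense hBaire hBP
end

section
/- Let X be a homogeneous separable metrizable space. Then X is either a meager space or a Baire space. -/
/-!
If some non-empty open set `U` is meagre, homogeneity moves `U` onto a meagre open neighbourhood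
of every point. Meagre sets form a σ-ideal, so by the Lindelöf property countably many of these
neighbourhoods cover the space, which is therefore meagre.
-/

open Set Topology

theorem IsMeagre.image_homeomorph {X : Type*} [TopologicalSpace X] (h : X ≃ₜ X) {s : Set X}
    (hs : IsMeagre s) : IsMeagre (h '' s) := by
  rw [h.image_eq_preimage_symm]
  exact hs.preimage_of_isOpenMap h.symm.continuous h.symm.isOpenMap

theorem isMeagre_univ_of_forall_exists_isMeagre_nhds {X : Type*} [TopologicalSpace X]
    [LindelofSpace X] (h : ∀ x : X, ∃ s ∈ 𝓝 x, IsMeagre s) : IsMeagre (univ : Set X) :=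
  isLindelof_univ.compl_mem_sets_of_nhdsWithin fun x _ ↦ by
    simpa only [nhdsWithin_univ, IsMeagre] using h x

theorem stmt7_general {X : Type*} [TopologicalSpace X]
    [SecondCountableTopology X]
    (hhom : ∀ x y : X, ∃ h : X ≃ₜ X, h x = y) :
    IsMeagre (Set.univ : Set X) ∨
      (∀ U : Set X, IsOpen U → U.Nonempty → ¬ IsMeagre U) := by
  refine or_iff_not_imp_right.mpr fun hnotBaire ↦ ?_
  push Not at hnotBaire
  obtain ⟨U, hUo, ⟨x, hxU⟩, hUm⟩ := hnotBaire
  refine isMeagre_univ_of_forall_exists_isMeagre_nhds fun y ↦ ?_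
  obtain ⟨h, rfl⟩ := hhom x y
  exact ⟨h '' U, (h.isOpenMap U hUo).mem_nhds (mem_image_of_mem h hxU), hUm.image_homeomorph h⟩

theorem stmt7 {X : Type*} [TopologicalSpace X] [TopologicalSpace.MetrizableSpace X]
    [SecondCountableTopology X]
    (hhom : ∀ x y : X, ∃ h : X ≃ₜ X, h x = y) :
    IsMeagre (Set.univ : Set X) ∨
      (∀ U : Set X, IsOpen U → U.Nonempty → ¬ IsMeagre U) :=
  stmt7_general hhom
end

section
/- Let X be a bi-Bernstein subset of ℝ. For a Borel subset B of X (Borel in the subspace topology), define μ̄(B) = μ(A) where A is any Borel subset of ℝ with A ∩ X = B and μ is Lebesgue measure. Then μ̄ is well-defined: if A₁, A₂ are Borel subsets of ℝ with A₁ ∩ X = A₂ ∩ X, then μ(A₁) = μ(A₂). -/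
open MeasureTheory

/-- `X ⊆ ℝ` is bi-Bernstein if every copy of the Cantor space in `ℝ` meets
both `X` and its complement. -/
def BiBernstein (X : Set ℝ) : Prop :=
  ∀ K : Set ℝ, Nonempty (K ≃ₜ (ℕ → Bool)) → (K ∩ X).Nonempty ∧ (K ∩ Xᶜ).Nonempty

/-! A measurable set of positive measure for a non-atomic inner regular measure contains a
compact set of positive measure; it is uncountable, so by the Cantor–Bendixson theorem it
contains a copy of the Cantor space. A bi-Bernstein set meets every such copy, hence any
measurable set missing it is null, and `A₁ Δ A₂` misses `X`. -/

theorem IsClosed.exists_subset_nonempty_homeomorph_cantor {α : Type*} [TopologicalSpace α]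
    [PolishSpace α] {C : Set α} (hC : IsClosed C) (hunc : ¬C.Countable) :
    ∃ K ⊆ C, Nonempty (K ≃ₜ (ℕ → Bool)) := by
  obtain ⟨f, hfC, hf, hinj⟩ := hC.exists_nat_bool_injection_of_not_countable hunc
  refine ⟨Set.range f, hfC, ⟨Homeomorph.symm ?_⟩⟩
  exact (hf.subtype_mk Set.mem_range_self).homeoOfEquivCompactToT2 (f := Equiv.ofInjective f hinj)

theorem MeasurableSet.exists_subset_nonempty_homeomorph_cantor {α : Type*} [TopologicalSpace α]
    [PolishSpace α] [MeasurableSpace α] {μ : Measure α} [NullSingletonClass μ] [μ.InnerRegular]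
    {S : Set α} (hS : MeasurableSet S) (hμS : μ S ≠ 0) :
    ∃ K ⊆ S, Nonempty (K ≃ₜ (ℕ → Bool)) := by
  obtain ⟨C, hCS, hC, hμC⟩ := hS.exists_lt_isCompact (pos_iff_ne_zero.2 hμS)
  have hunc : ¬C.Countable := fun hcount => (hcount.measure_zero μ ▸ hμC).false
  obtain ⟨K, hKC, hK⟩ := hC.isClosed.exists_subset_nonempty_homeomorph_cantor hunc
  exact ⟨K, hKC.trans hCS, hK⟩

namespace BiBernstein

variable {X : Set ℝ} {μ : Measure ℝ} [NullSingletonClass μ] [μ.InnerRegular]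

theorem measure_eq_zero_of_disjoint (hX : BiBernstein X) {S : Set ℝ} (hS : MeasurableSet S)
    (hSX : Disjoint S X) : μ S = 0 := by
  by_contra hμS
  obtain ⟨K, hKS, hK⟩ := hS.exists_subset_nonempty_homeomorph_cantor hμS
  obtain ⟨x, hxK, hxX⟩ := (hX K hK).1
  exact hSX.notMem_of_mem_left (hKS hxK) hxX

theorem measure_eq_of_inter_eq (hX : BiBernstein X) {A₁ A₂ : Set ℝ} (h₁ : MeasurableSet A₁)
    (h₂ : MeasurableSet A₂) (h : A₁ ∩ X = A₂ ∩ X) : μ A₁ = μ A₂ := by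
  have diff_disjoint {B₁ B₂ : Set ℝ} (hB : B₁ ∩ X = B₂ ∩ X) : Disjoint (B₁ \ B₂) X :=
    Set.disjoint_left.2 fun x hx hxX => hx.2 (hB ▸ ⟨hx.1, hxX⟩ : x ∈ B₂ ∩ X).1
  refine measure_congr (ae_eq_set.2 ⟨?_, ?_⟩)
  · exact measure_eq_zero_of_disjoint hX (h₁.diff h₂) (diff_disjoint h)
  · exact measure_eq_zero_of_disjoint hX (h₂.diff h₁) (diff_disjoint h.symm)

end BiBernstein

theorem stmt10 (X : Set ℝ) (hX : BiBernstein X)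
    (A₁ A₂ : Set ℝ) (h₁ : MeasurableSet A₁) (h₂ : MeasurableSet A₂)
    (h : A₁ ∩ X = A₂ ∩ X) :
    volume A₁ = volume A₂ :=
  BiBernstein.measure_eq_of_inter_eq hX h₁ h₂ h
end

section
/- Let Z be a topological space and D ⊆ 𝒫(ω). Then there exists a 2^ω-universal set for Γ_D(Z): that is, a set U ⊆ 2^ω × Z with U ∈ Γ_D(2^ω × Z) such that {U_x : x ∈ 2^ω} = Γ_D(Z), where U_x = {y ∈ Z : (x,y) ∈ U}. -/
/-- `Γ_D(Z)`: sets obtained by applying `H_D` to a sequence of open sets. -/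
def GammaD {Z : Type*} [TopologicalSpace Z] (D : Set (Set ℕ)) : Set (Set Z) :=
  {S | ∃ A : ℕ → Set Z, (∀ n, IsOpen (A n)) ∧ S = hausdorffOp D A}

/-!
Fix a countable basis `B₀, B₁, …` of `Z`. The open set `⋃ₖ {x | x k} × Bₖ ⊆ 2^ω × Z` is
universal for the open subsets of `Z`: the open set `V` is its section at the code
`k ↦ (Bₖ ⊆ V)`. Splitting a code along `Nat.pair` yields open sets `W₀, W₁, …` whose sections
at a single code realise any prescribed sequence of open sets. Since sections commute with
`H_D`, the set `H_D(W₀, W₁, …)` is universal for `Γ_D(Z)`.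
-/

open Set TopologicalSpace

section

variable {Z : Type*}

theorem preimage_hausdorffOp {X : Type*} (f : X → Z) (D : Set (Set ℕ)) (A : ℕ → Set Z) :
    f ⁻¹' hausdorffOp D A = hausdorffOp D fun n => f ⁻¹' A n :=
  rfl

variable [TopologicalSpace Z]

theorem exists_universal_isOpen [SecondCountableTopology Z] :
    ∃ U : Set ((ℕ → Bool) × Z), IsOpen U ∧
      ∀ V : Set Z, IsOpen V → ∃ x, Prod.mk x ⁻¹' U = V := by
  classical
  obtain ⟨B, hB⟩ := exists_seq_basis Z
  refine ⟨⋃ k, {x | x k = true} ×ˢ B k, ?_, fun V hV => ⟨fun k => decide (B k ⊆ V), ?_⟩⟩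
  · refine isOpen_iUnion fun k => IsOpen.prod ?_ (hB.isOpen (mem_range_self k))
    exact (continuous_apply (A := fun _ : ℕ => Bool) k).isOpen_preimage
      ({true} : Set Bool) (isOpen_discrete _)
  · ext y
    simp only [mem_preimage, mem_iUnion, mem_prod, mem_ofPred_eq, decide_eq_true_eq]
    constructor
    · rintro ⟨k, hkV, hy⟩
      exact hkV hy
    · intro hy
      obtain ⟨_, ⟨k, rfl⟩, hy, hkV⟩ := hB.exists_subset_of_mem_open hy hV
      exact ⟨k, hkV, hy⟩

theorem exists_universal_seq_isOpen [SecondCountableTopology Z] :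
    ∃ W : ℕ → Set ((ℕ → Bool) × Z), (∀ n, IsOpen (W n)) ∧
      ∀ V : ℕ → Set Z, (∀ n, IsOpen (V n)) → ∃ x, ∀ n, Prod.mk x ⁻¹' W n = V n := by
  obtain ⟨U, hU, huniv⟩ := exists_universal_isOpen (Z := Z)
  let row (n : ℕ) (p : (ℕ → Bool) × Z) : (ℕ → Bool) × Z := (fun k => p.1 (Nat.pair n k), p.2)
  refine ⟨fun n => row n ⁻¹' U, fun n => hU.preimage (by fun_prop), fun V hV => ?_⟩
  choose c hc using fun n => huniv (V n) (hV n)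
  refine ⟨fun m => c m.unpair.1 m.unpair.2, fun n => ?_⟩
  have hrow : (fun k => c (Nat.pair n k).unpair.1 (Nat.pair n k).unpair.2) = c n := by
    simp only [Nat.unpair_pair]
  rw [← hc n, ← hrow]
  rfl

theorem mem_GammaD_iff_exists_eq_preimage_hausdorffOp {X : Type*} [TopologicalSpace X]
    {W : ℕ → Set (X × Z)} (hW : ∀ n, IsOpen (W n))
    (huniv : ∀ V : ℕ → Set Z, (∀ n, IsOpen (V n)) → ∃ x, ∀ n, Prod.mk x ⁻¹' W n = V n)
    (D : Set (Set ℕ)) (B : Set Z) :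
    B ∈ GammaD D ↔ ∃ x, B = Prod.mk x ⁻¹' hausdorffOp D W := by
  simp only [preimage_hausdorffOp]
  constructor
  · rintro ⟨A, hA, rfl⟩
    obtain ⟨x, hx⟩ := huniv A hA
    exact ⟨x, by simp only [hx]⟩
  · rintro ⟨x, rfl⟩
    exact ⟨_, fun n => (hW n).preimage (Continuous.prodMk_right x), rfl⟩

end

theorem stmt11_general {Z : Type*} [TopologicalSpace Z]
    [SecondCountableTopology Z] (D : Set (Set ℕ)) :
    ∃ U : Set ((ℕ → Bool) × Z), U ∈ GammaD D ∧
      ∀ B : Set Z, B ∈ GammaD D ↔ ∃ x : ℕ → Bool, B = {y | (x, y) ∈ U} := by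
  obtain ⟨W, hW, huniv⟩ := exists_universal_seq_isOpen (Z := Z)
  exact ⟨hausdorffOp D W, ⟨W, hW, rfl⟩, mem_GammaD_iff_exists_eq_preimage_hausdorffOp hW huniv D⟩

theorem stmt11 {Z : Type*} [TopologicalSpace Z] [TopologicalSpace.MetrizableSpace Z]
    [SecondCountableTopology Z] (D : Set (Set ℕ)) :
    ∃ U : Set ((ℕ → Bool) × Z), U ∈ GammaD D ∧
      ∀ B : Set Z, B ∈ GammaD D ↔ ∃ x : ℕ → Bool, B = {y | (x, y) ∈ U} :=
  stmt11_general D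
end
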